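/- For every refining quadratic map ξ and all streams α, β of digits from {L, R, M}, there exist n ∈ ℕ and φ ∈ {L, R, M} such that ξ(α₀∘...∘α_{n-1}([-1,1]), β₀∘...∘β_{n-1}([-1,1])) ⊆ φ([-1,1]). -/

import Mathlib

noncomputable def digitL : ℝ → ℝ := fun x => (x - 1) / (x + 3)
noncomputable def digitR : ℝ → ℝ := fun x => (x + 1) / (-x + 3)
noncomputable def digitM : ℝ → ℝ := fun x => x / 3

noncomputable def compStream (α : ℕ → ℝ → ℝ) : ℕ → ℝ → ℝ
  | 0 => id
  | k + 1 => compStream α k ∘ α k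

/-!
Composing the first `n` digits of a stream gives a Möbius map `x ↦ (p x + q) / (r x + s)` with
positive determinant `D` and denominator positive on `[-1, 1]`, so the image of `[-1, 1]` is an
interval of length `2 D / ((r + s) (s - r))`. Carrying along the invariant `D ≤ (r x + s) ^ 2`,
each further digit raises `(r + s) (s - r) / D` by at least one, so this length is at most
`2 / (n + 1)`. As `ξ` is uniformly continuous on the square, for large `n` the image of the product
of the two intervals has diameter at most `1 / 3`, and a subset of `[-1, 1]` of diameter at most
`1 / 3` lies in one of `[-1, 0]`, `[0, 1]`, `[-1/3, 1/3]`, the ranges of the three digits.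
-/

open Set

noncomputable def mobius (p q r s x : ℝ) : ℝ := (p * x + q) / (r * x + s)

section Mobius

variable {p q r s : ℝ}

theorem mul_mobius_add_mul {a b x : ℝ} (hx : r * x + s ≠ 0) :
    (a * mobius p q r s x + b) * (r * x + s) = a * (p * x + q) + b * (r * x + s) := by
  rw [mobius, add_mul, mul_assoc, div_mul_cancel₀ _ hx]

theorem mobius_comp {p' q' r' s' x : ℝ} (hx : r' * x + s' ≠ 0) :
    mobius p q r s (mobius p' q' r' s' x) =
      mobius (p * p' + q * r') (p * q' + q * s') (r * p' + s * r') (r * q' + s * s') x := by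
  rw [mobius, ← mul_div_mul_right _ _ hx, mul_mobius_add_mul hx, mul_mobius_add_mul hx, mobius]
  congr 1 <;> ring

theorem mobius_sub_mobius {x y : ℝ} (hx : r * x + s ≠ 0) (hy : r * y + s ≠ 0) :
    mobius p q r s x - mobius p q r s y =
      (p * s - q * r) * (x - y) / ((r * x + s) * (r * y + s)) := by
  unfold mobius
  rw [div_sub_div _ _ hx hy]
  ring

theorem mobius_monotoneOn {S : Set ℝ} (hdet : 0 < p * s - q * r)
    (hden : ∀ x ∈ S, 0 < r * x + s) : MonotoneOn (mobius p q r s) S := by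
  intro x hx y hy hxy
  rw [← sub_nonneg, mobius_sub_mobius (hden y hy).ne' (hden x hx).ne']
  exact div_nonneg (mul_nonneg hdet.le (sub_nonneg.2 hxy)) (mul_pos (hden y hy) (hden x hx)).le

theorem mobius_image_Icc {a b : ℝ} (hab : a ≤ b) (hdet : 0 < p * s - q * r)
    (hden : ∀ x ∈ Icc a b, 0 < r * x + s) :
    mobius p q r s '' Icc a b = Icc (mobius p q r s a) (mobius p q r s b) :=
  ContinuousOn.image_Icc_of_monotoneOn hab
    (ContinuousOn.div (by fun_prop) (by fun_prop) fun x hx => (hden x hx).ne')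
    (mobius_monotoneOn hdet hden)

end Mobius

theorem digitL_eq_mobius : digitL = mobius 1 (-1) 1 3 := by
  ext x; simp only [digitL, mobius]; ring_nf

theorem digitR_eq_mobius : digitR = mobius 1 1 (-1) 3 := by
  ext x; simp only [digitR, mobius]; ring_nf

theorem digitM_eq_mobius : digitM = mobius 1 0 0 3 := by
  ext x; simp only [digitM, mobius]; ring_nf

theorem digitL_image : digitL '' Icc (-1) 1 = Icc (-1) 0 := by
  rw [digitL_eq_mobius,
    mobius_image_Icc (by norm_num) (by norm_num) fun x hx => by linarith [hx.1]]
  norm_num [mobius]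

theorem digitR_image : digitR '' Icc (-1) 1 = Icc 0 1 := by
  rw [digitR_eq_mobius,
    mobius_image_Icc (by norm_num) (by norm_num) fun x hx => by linarith [hx.2]]
  norm_num [mobius]

theorem digitM_image : digitM '' Icc (-1) 1 = Icc (-(1 / 3)) (1 / 3) := by
  rw [digitM_eq_mobius, mobius_image_Icc (by norm_num) (by norm_num) fun x _ => by norm_num]
  norm_num [mobius]

theorem mapsTo_digit {d : ℝ → ℝ} (hd : d = digitL ∨ d = digitR ∨ d = digitM) :
    MapsTo d (Icc (-1) 1) (Icc (-1) 1) := by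
  rcases hd with rfl | rfl | rfl <;>
    norm_num [mapsTo_iff_image_subset, digitL_image, digitR_image, digitM_image,
      Icc_subset_Icc_iff]

structure MobiusWidthBound (n : ℕ) (p q r s : ℝ) : Prop where
  det_pos : 0 < p * s - q * r
  den_pos : ∀ x ∈ Icc (-1 : ℝ) 1, 0 < r * x + s
  det_le_den_sq : ∀ x ∈ Icc (-1 : ℝ) 1, p * s - q * r ≤ (r * x + s) ^ 2
  succ_mul_det_le : (n + 1) * (p * s - q * r) ≤ (r + s) * (s - r)

namespace MobiusWidthBound

variable {n : ℕ} {p q r s : ℝ}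

theorem abs_sub_le (h : MobiusWidthBound n p q r s) {x y : ℝ} (hx : x ∈ Icc (-1) 1)
    (hy : y ∈ Icc (-1) 1) : |mobius p q r s x - mobius p q r s y| ≤ 2 / (n + 1) := by
  have hone : (1 : ℝ) ∈ Icc (-1) 1 := by norm_num
  have hneg : (-1 : ℝ) ∈ Icc (-1) 1 := by norm_num
  have hmono := mobius_monotoneOn h.det_pos h.den_pos
  have hmem : ∀ z ∈ Icc (-1 : ℝ) 1,
      mobius p q r s z ∈ Icc (mobius p q r s (-1)) (mobius p q r s 1) :=
    fun z hz => ⟨hmono hneg hz hz.1, hmono hz hone hz.2⟩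
  have h₁ := h.den_pos 1 hone
  have h₂ := h.den_pos (-1) hneg
  calc |mobius p q r s x - mobius p q r s y|
      ≤ mobius p q r s 1 - mobius p q r s (-1) := Real.dist_le_of_mem_Icc (hmem x hx) (hmem y hy)
    _ = 2 * (p * s - q * r) / ((r + s) * (s - r)) := by
      rw [mobius_sub_mobius h₁.ne' h₂.ne']; ring_nf
    _ ≤ 2 / (n + 1) := by
      rw [div_le_div_iff₀ (by nlinarith) (by positivity)]
      nlinarith [h.succ_mul_det_le]

theorem comp (h : MobiusWidthBound n p q r s) {p' q' r' s' : ℝ}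
    (hdet : 0 < p' * s' - q' * r')
    (hden : ∀ x ∈ Icc (-1 : ℝ) 1, 0 < r' * x + s' ∧ p' * s' - q' * r' ≤ (r' * x + s') ^ 2)
    (hmaps : MapsTo (mobius p' q' r' s') (Icc (-1) 1) (Icc (-1) 1))
    (hsucc : (n + 2) * ((p * s - q * r) * (p' * s' - q' * r')) ≤
      (r * (p' + q') + s * (r' + s')) * (r * (q' - p') + s * (s' - r'))) :
    MobiusWidthBound (n + 1) (p * p' + q * r') (p * q' + q * s') (r * p' + s * r')
      (r * q' + s * s') := by
  have hdet_mul : (p * p' + q * r') * (r * q' + s * s') - (p * q' + q * s') * (r * p' + s * r') =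
      (p * s - q * r) * (p' * s' - q' * r') := by ring
  have hden_mul : ∀ x ∈ Icc (-1 : ℝ) 1, (r * p' + s * r') * x + (r * q' + s * s') =
      (r * mobius p' q' r' s' x + s) * (r' * x + s') := fun x hx => by
    rw [mul_mobius_add_mul (hden x hx).1.ne']
    ring
  refine ⟨?_, fun x hx => ?_, fun x hx => ?_, ?_⟩
  · rw [hdet_mul]; exact mul_pos h.det_pos hdet
  · rw [hden_mul x hx]; exact mul_pos (h.den_pos _ (hmaps hx)) (hden x hx).1
  · rw [hdet_mul, hden_mul x hx, mul_pow]
    exact mul_le_mul (h.det_le_den_sq _ (hmaps hx)) (hden x hx).2 hdet.le (sq_nonneg _)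
  · rw [hdet_mul]; push_cast; linarith

theorem exists_comp_digit (h : MobiusWidthBound n p q r s) {d : ℝ → ℝ}
    (hd : d = digitL ∨ d = digitR ∨ d = digitM) :
    ∃ p' q' r' s', MobiusWidthBound (n + 1) p' q' r' s' ∧
      ∀ x ∈ Icc (-1 : ℝ) 1, mobius p q r s (d x) = mobius p' q' r' s' x := by
  have hD := h.succ_mul_det_le
  rcases hd with rfl | rfl | rfl
  · refine ⟨_, _, _, _, h.comp (p' := 1) (q' := -1) (r' := 1) (s' := 3) (by norm_num)
      (fun x hx => ⟨by linarith [hx.1], by nlinarith [hx.1]⟩)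
      (digitL_eq_mobius ▸ mapsTo_digit (by simp)) ?_,
      fun x hx => by rw [digitL_eq_mobius, mobius_comp (by linarith [hx.1])]⟩
    nlinarith [h.det_le_den_sq (-1) (by norm_num)]
  · refine ⟨_, _, _, _, h.comp (p' := 1) (q' := 1) (r' := -1) (s' := 3) (by norm_num)
      (fun x hx => ⟨by linarith [hx.2], by nlinarith [hx.2]⟩)
      (digitR_eq_mobius ▸ mapsTo_digit (by simp)) ?_,
      fun x hx => by rw [digitR_eq_mobius, mobius_comp (by linarith [hx.2])]⟩
    nlinarith [h.det_le_den_sq 1 (by norm_num)]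
  · refine ⟨_, _, _, _, h.comp (p' := 1) (q' := 0) (r' := 0) (s' := 3) (by norm_num)
      (fun _ _ => by norm_num) (digitM_eq_mobius ▸ mapsTo_digit (by simp)) ?_,
      fun x _ => by rw [digitM_eq_mobius, mobius_comp (by norm_num)]⟩
    nlinarith [h.det_le_den_sq 0 (by norm_num), sq_nonneg r]

end MobiusWidthBound

section CompStream

variable {α : ℕ → ℝ → ℝ}

theorem mapsTo_compStream (hα : ∀ i, α i = digitL ∨ α i = digitR ∨ α i = digitM) (n : ℕ) :
    MapsTo (compStream α n) (Icc (-1) 1) (Icc (-1) 1) := by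
  induction n with
  | zero => exact mapsTo_id _
  | succ n ih => exact ih.comp (mapsTo_digit (hα n))

theorem exists_mobiusWidthBound_eqOn_compStream
    (hα : ∀ i, α i = digitL ∨ α i = digitR ∨ α i = digitM) (n : ℕ) :
    ∃ p q r s, MobiusWidthBound n p q r s ∧
      EqOn (compStream α n) (mobius p q r s) (Icc (-1) 1) := by
  induction n with
  | zero =>
    refine ⟨1, 0, 0, 1, ⟨by norm_num, fun _ _ => by norm_num, fun _ _ => by norm_num,
      by norm_num⟩, fun x _ => ?_⟩
    simp [compStream, mobius]
  | succ n ih =>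
    obtain ⟨p, q, r, s, h, heq⟩ := ih
    obtain ⟨p', q', r', s', h', heq'⟩ := h.exists_comp_digit (hα n)
    refine ⟨p', q', r', s', h', fun x hx => ?_⟩
    rw [compStream, Function.comp_apply, heq (mapsTo_digit (hα n) hx), heq' x hx]

theorem abs_compStream_sub_le (hα : ∀ i, α i = digitL ∨ α i = digitR ∨ α i = digitM) (n : ℕ)
    {x y : ℝ} (hx : x ∈ Icc (-1) 1) (hy : y ∈ Icc (-1) 1) :
    |compStream α n x - compStream α n y| ≤ 2 / (n + 1) := by
  obtain ⟨p, q, r, s, h, heq⟩ := exists_mobiusWidthBound_eqOn_compStream hα n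
  rw [heq hx, heq hy]
  exact h.abs_sub_le hx hy

end CompStream

theorem exists_digit_image_superset {S : Set ℝ} (hS : S ⊆ Icc (-1) 1)
    (hdiam : ∀ t ∈ S, ∀ t' ∈ S, |t - t'| ≤ 1 / 3) :
    ∃ φ ∈ ({digitL, digitR, digitM} : Set (ℝ → ℝ)), S ⊆ φ '' Icc (-1) 1 := by
  by_cases hL : S ⊆ Icc (-1) 0
  · exact ⟨digitL, by simp, digitL_image ▸ hL⟩
  by_cases hR : S ⊆ Icc 0 1
  · exact ⟨digitR, by simp, digitR_image ▸ hR⟩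
  obtain ⟨t, ht, ht_pos⟩ : ∃ t ∈ S, 0 < t := by
    simp only [not_subset, mem_Icc, not_and_or, not_le] at hL
    obtain ⟨t, ht, h | h⟩ := hL
    exacts [absurd (hS ht).1 h.not_ge, ⟨t, ht, h⟩]
  obtain ⟨t', ht', ht'_neg⟩ : ∃ t' ∈ S, t' < 0 := by
    simp only [not_subset, mem_Icc, not_and_or, not_le] at hR
    obtain ⟨t', ht', h | h⟩ := hR
    exacts [⟨t', ht', h⟩, absurd (hS ht').2 h.not_ge]
  refine ⟨digitM, by simp, digitM_image ▸ fun u hu => ⟨?_, ?_⟩⟩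
  · linarith [(abs_sub_le_iff.mp (hdiam t ht u hu)).1]
  · linarith [(abs_sub_le_iff.mp (hdiam u hu t' ht')).1]

theorem ContinuousOn.exists_pos_abs_sub_lt {s t : Set ℝ} {ξ : ℝ → ℝ → ℝ} (hs : IsCompact s)
    (ht : IsCompact t) (hξ : ContinuousOn (Function.uncurry ξ) (s ×ˢ t)) {ε : ℝ} (hε : 0 < ε) :
    ∃ δ > 0, ∀ x ∈ s, ∀ x' ∈ s, ∀ y ∈ t, ∀ y' ∈ t, |x - x'| < δ → |y - y'| < δ →
      |ξ x y - ξ x' y'| < ε := by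
  obtain ⟨δ, hδ, H⟩ :=
    Metric.uniformContinuousOn_iff.mp ((hs.prod ht).uniformContinuousOn_of_continuous hξ) ε hε
  refine ⟨δ, hδ, fun x hx x' hx' y hy y' hy' hxx' hyy' => ?_⟩
  have hdist : dist (x, y) (x', y') < δ := by
    rw [Prod.dist_eq, Real.dist_eq, Real.dist_eq]
    exact max_lt hxx' hyy'
  simpa only [Real.dist_eq, Function.uncurry_apply_pair] using
    H (x, y) ⟨hx, hy⟩ (x', y') ⟨hx', hy'⟩ hdist

theorem quadratic_eventually_emits (a b c d e f g h : ℝ) (ξ : ℝ → ℝ → ℝ)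
    (hξ : ξ = fun x y =>
      (a * x * y + b * x + c * y + d) / (e * x * y + f * x + g * y + h))
    (hbnd : ∀ x ∈ Set.Icc (-1 : ℝ) 1, ∀ y ∈ Set.Icc (-1 : ℝ) 1,
      e * x * y + f * x + g * y + h ≠ 0)
    (href : ∀ x ∈ Set.Icc (-1 : ℝ) 1, ∀ y ∈ Set.Icc (-1 : ℝ) 1,
      ξ x y ∈ Set.Icc (-1 : ℝ) 1)
    (α β : ℕ → ℝ → ℝ)
    (hα : ∀ i, α i = digitL ∨ α i = digitR ∨ α i = digitM)
    (hβ : ∀ i, β i = digitL ∨ β i = digitR ∨ β i = digitM) :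
    ∃ n : ℕ, ∃ φ ∈ ({digitL, digitR, digitM} : Set (ℝ → ℝ)),
      ∀ x ∈ Set.Icc (-1 : ℝ) 1, ∀ y ∈ Set.Icc (-1 : ℝ) 1,
        ξ (compStream α n x) (compStream β n y) ∈ φ '' Set.Icc (-1 : ℝ) 1 := by
  have hcont : ContinuousOn (Function.uncurry ξ) (Icc (-1 : ℝ) 1 ×ˢ Icc (-1 : ℝ) 1) := by
    subst hξ
    exact ContinuousOn.div (by fun_prop) (by fun_prop) fun z hz => hbnd z.1 hz.1 z.2 hz.2
  obtain ⟨δ, hδ, hclose⟩ :=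
    hcont.exists_pos_abs_sub_lt isCompact_Icc isCompact_Icc (by norm_num : (0 : ℝ) < 1 / 3)
  obtain ⟨n, hn⟩ := exists_nat_one_div_lt (half_pos hδ)
  have hnarrow : (2 : ℝ) / (n + 1) < δ := by rw [← mul_one_div]; linarith
  obtain ⟨φ, hφ, hsub⟩ := exists_digit_image_superset
    (S := image2 (fun x y => ξ (compStream α n x) (compStream β n y)) (Icc (-1) 1) (Icc (-1) 1))
    (image2_subset_iff.mpr fun x hx y hy =>
      href _ (mapsTo_compStream hα n hx) _ (mapsTo_compStream hβ n hy))
    (by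
      rintro _ ⟨x, hx, y, hy, rfl⟩ _ ⟨x', hx', y', hy', rfl⟩
      exact (hclose _ (mapsTo_compStream hα n hx) _ (mapsTo_compStream hα n hx')
        _ (mapsTo_compStream hβ n hy) _ (mapsTo_compStream hβ n hy')
        ((abs_compStream_sub_le hα n hx hx').trans_lt hnarrow)
        ((abs_compStream_sub_le hβ n hy hy').trans_lt hnarrow)).le)
  exact ⟨n, φ, hφ, fun x hx y hy => hsub (mem_image2_of_mem hx hy)⟩
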